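/- Main theorem (conditional form): Assume that for every finite planar point set there is a 2-coloring such that every homothetic copy of the standard triangle containing at least 12 points contains both colors. Then for every finite point set P ⊆ ℝ², every triangle T ⊆ ℝ², and every positive integer k, there exists a k-coloring of P such that every homothetic copy of T containing at least 144·k^8 points of P contains all k colors. -/

import Mathlib

/-!
An affine bijection carries the standard triangle onto `T` and homothetic copies onto homothetic
copies, so it suffices to treat the standard triangle, whose copies are the right triangles
`{p | c ≤ p, p.1 + p.2 ≤ s}`.

If a `2`-coloring works with threshold `m`, then every copy holding `2mt` points holds at least
`t` points of each color: otherwise the set `B` of points of the rarer color has at most `t - 1`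
elements, and the remaining points of the copy are covered by at most `2|B| + 1` smaller copies
that avoid `B`, one of which then holds `m` points but misses that color. These smaller copies
have their right-angle corners at corners of the staircase formed by the points of `B`, and
reach up to just below the lowest point of `B` above their corner.

Coloring each color class again, recursively, gives `2^j` colors with threshold `(2m)^j`; for
`m = 12` and `2^j ≥ k` colors merged down to `k`, the threshold `24^j` is at most `144 k^8`.
-/

/-- A translate of the closed positive quadrant based at `(a, b)`. -/
def quadrant (a b : ℝ) : Set (ℝ × ℝ) := {p | a ≤ p.1 ∧ b ≤ p.2}

/-- The standard triangle with vertices (0,0), (1,0), (0,1). -/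
def stdT : Set (ℝ × ℝ) := {p | 0 ≤ p.1 ∧ 0 ≤ p.2 ∧ p.1 + p.2 ≤ 1}

/-- `S` is a homothetic copy (positive homothety plus translation) of `T`. -/
def IsHomCopy (T S : Set (ℝ × ℝ)) : Prop :=
  ∃ l : ℝ, 0 < l ∧ ∃ w : ℝ × ℝ, S = (fun v => l • v + w) '' T

/-- The coloring `φ` of `P` with `k` colors is polychromatic for homothetic
copies of `T` with threshold `m`: every homothetic copy of `T` containing at
least `m` points of `P` contains a point of each color. -/
def PolyColor (T : Set (ℝ × ℝ)) (P : Finset (ℝ × ℝ)) (m k : ℕ)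
    (φ : ℝ × ℝ → Fin k) : Prop :=
  ∀ S : Set (ℝ × ℝ), IsHomCopy T S → m ≤ ((P : Set (ℝ × ℝ)) ∩ S).ncard →
    ∀ i : Fin k, ∃ p ∈ P, p ∈ S ∧ φ p = i

namespace Finset

variable {ι α : Type*} [LinearOrder α] {b : α} {f : ι → α}

lemma fold_max_eq_or (s : Finset ι) : s.fold max b f = b ∨ ∃ i ∈ s, s.fold max b f = f i := by
  rcases (le_fold_max _).1 (le_refl (s.fold max b f)) with h | ⟨i, hi, h⟩
  · exact Or.inl (le_antisymm h ((le_fold_max _).2 (Or.inl le_rfl)))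
  · exact Or.inr ⟨i, hi, le_antisymm h (((fold_max_le _).1 le_rfl).2 i hi)⟩

lemma fold_max_eq_of_le {s t : Finset ι} (hle : ∀ i ∈ t, f i ≤ s.fold max b f)
    (hmax : s.fold max b f = b ∨ ∃ i ∈ t, s.fold max b f = f i) :
    t.fold max b f = s.fold max b f := by
  refine le_antisymm ((fold_max_le _).2 ⟨(le_fold_max _).2 (Or.inl le_rfl), hle⟩) ?_
  rcases hmax with h | ⟨i, hi, h⟩
  · exact h.le.trans ((le_fold_max _).2 (Or.inl le_rfl))
  · exact h.le.trans ((le_fold_max _).2 (Or.inr ⟨i, hi, le_rfl⟩))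

end Finset

def tri (c : ℝ × ℝ) (s : ℝ) : Set (ℝ × ℝ) := {p | c ≤ p ∧ p.1 + p.2 ≤ s}

lemma image_stdT_eq_tri {l : ℝ} (hl : 0 < l) (w : ℝ × ℝ) :
    (fun v => l • v + w) '' stdT = tri w (w.1 + w.2 + l) := by
  ext p
  simp only [stdT, tri, Set.mem_image, Set.mem_ofPred_eq, Prod.le_def]
  constructor
  · rintro ⟨v, ⟨h1, h2, h3⟩, rfl⟩
    simp only [Prod.fst_add, Prod.snd_add, Prod.smul_fst, Prod.smul_snd, smul_eq_mul]
    refine ⟨⟨?_, ?_⟩, ?_⟩ <;> nlinarith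
  · rintro ⟨⟨h1, h2⟩, h3⟩
    refine ⟨((p.1 - w.1) / l, (p.2 - w.2) / l), ⟨by positivity, by positivity, ?_⟩, ?_⟩
    · rw [← add_div, div_le_one hl]; linarith
    · ext <;> simp only [Prod.fst_add, Prod.snd_add, Prod.smul_fst, Prod.smul_snd, smul_eq_mul]
        <;> field_simp <;> ring

lemma tri_subsingleton {c : ℝ × ℝ} {s : ℝ} (hs : s ≤ c.1 + c.2) : (tri c s).Subsingleton := by
  rintro p ⟨⟨hp1, hp2⟩, hp⟩ q ⟨⟨hq1, hq2⟩, hq⟩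
  ext <;> linarith

lemma isHomCopy_tri {c : ℝ × ℝ} {s : ℝ} (h : (tri c s).Nontrivial) : IsHomCopy stdT (tri c s) := by
  have hs : c.1 + c.2 < s := by
    by_contra! hs
    exact h.not_subsingleton (tri_subsingleton hs)
  refine ⟨s - c.1 - c.2, by linarith, c, ?_⟩
  rw [image_stdT_eq_tri (by linarith)]
  congr 1
  ring

lemma tri_subset_tri {c c' : ℝ × ℝ} {s s' : ℝ} (hc : c ≤ c') (hs : s' ≤ s) :
    tri c' s' ⊆ tri c s :=
  fun _ ⟨hp, hp'⟩ => ⟨hc.trans hp, hp'.trans hs⟩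

lemma exists_pos_gap (F : Finset ℝ) : ∃ η > 0, ∀ x ∈ F, ∀ y ∈ F, x < y → x + η ≤ y := by
  have : ∀ᶠ η in nhdsWithin (0 : ℝ) (Set.Ioi 0), ∀ x ∈ F, ∀ y ∈ F, x < y → x + η ≤ y := by
    simp only [Filter.eventually_all_finset]
    intro x _ y _
    by_cases hxy : x < y
    · filter_upwards [nhdsWithin_le_nhds (eventually_lt_nhds (sub_pos.2 hxy))] with η hη _
      linarith
    · exact Filter.Eventually.of_forall fun _ h => absurd h hxy
  exact (this.and self_mem_nhdsWithin).exists.imp fun η h => ⟨h.2, h.1⟩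

/- Gaps of size `η` between distinct coordinates let "just right of `e`" be written `e.1 + η`. -/
def Separated (η : ℝ) (X : Finset (ℝ × ℝ)) : Prop :=
  ∀ p ∈ X, ∀ q ∈ X, (p.1 < q.1 → p.1 + η ≤ q.1) ∧ (p.2 < q.2 → p.2 + η ≤ q.2) ∧
    (p.1 + p.2 < q.1 + q.2 → p.1 + p.2 + η ≤ q.1 + q.2)

lemma exists_separated (X : Finset (ℝ × ℝ)) : ∃ η > 0, Separated η X := by
  set F := X.image Prod.fst ∪ X.image Prod.snd ∪ X.image fun p => p.1 + p.2
  have hF : ∀ p ∈ X, p.1 ∈ F ∧ p.2 ∈ F ∧ p.1 + p.2 ∈ F := fun p hp => by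
    simp only [F, Finset.mem_union, Finset.mem_image]
    exact ⟨Or.inl (Or.inl ⟨p, hp, rfl⟩), Or.inl (Or.inr ⟨p, hp, rfl⟩), Or.inr ⟨p, hp, rfl⟩⟩
  obtain ⟨η, hη, h⟩ := exists_pos_gap F
  exact ⟨η, hη, fun p hp q hq => ⟨h _ (hF p hp).1 _ (hF q hq).1,
    h _ (hF p hp).2.1 _ (hF q hq).2.1, h _ (hF p hp).2.2 _ (hF q hq).2.2⟩⟩

lemma Separated.mono {η : ℝ} {X Y : Finset (ℝ × ℝ)} (h : Separated η X) (hYX : Y ⊆ X) :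
    Separated η Y :=
  fun p hp q hq => h p (hYX hp) q (hYX hq)

namespace Staircase

variable (B : Finset (ℝ × ℝ)) (η : ℝ) (w : ℝ × ℝ)

noncomputable def below (p : ℝ × ℝ) : Finset (ℝ × ℝ) := {e ∈ B | e.1 + e.2 ≤ p.1 + p.2}

noncomputable def run (D : Finset (ℝ × ℝ)) (y : ℝ) : ℝ :=
  {e ∈ D | y ≤ e.2}.fold max w.1 fun e => e.1 + η

noncomputable def rise (D : Finset (ℝ × ℝ)) (x : ℝ) : ℝ :=
  {e ∈ D | x ≤ e.1}.fold max w.2 fun e => e.2 + η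

/- `corner B η w p` is the corner of the staircase of `below B p` lying weakly below-left of `p`
(for `p ∉ B`): `run` moves right past the points at height at least `p.2`, then `rise` moves up
past the points to the right of that. The corner sits just right of the point that stops `run`
or just above the one that stops `rise`, whichever has the higher level; with `w` this gives
the `2|B| + 1` `candidates`. -/
noncomputable def corner (p : ℝ × ℝ) : ℝ × ℝ :=
  (run η w (below B p) p.2, rise η w (below B p) (run η w (below B p) p.2))

noncomputable def candidates : Finset (ℝ × ℝ) :=
  insert w (B.image (fun u => (u.1 + η, rise η w (below B u) (u.1 + η))) ∪
    B.image fun v => (run η w (below B v) (v.2 + η), v.2 + η))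

noncomputable def top (Λ : ℝ) (c : ℝ × ℝ) : ℝ :=
  {e ∈ B | c ≤ e}.fold min Λ fun e => e.1 + e.2 - η

variable {B η w}

lemma mem_below {p e : ℝ × ℝ} : e ∈ below B p ↔ e ∈ B ∧ e.1 + e.2 ≤ p.1 + p.2 :=
  Finset.mem_filter

lemma below_subset_below {p u : ℝ × ℝ} (hu : u ∈ below B p) : below B u ⊆ below B p :=
  fun _ he => mem_below.2 ⟨(mem_below.1 he).1, (mem_below.1 he).2.trans (mem_below.1 hu).2⟩

lemma add_le_run {D : Finset (ℝ × ℝ)} {y : ℝ} {e : ℝ × ℝ} (he : e ∈ D) (hy : y ≤ e.2) :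
    e.1 + η ≤ run η w D y :=
  (Finset.le_fold_max _).2 (Or.inr ⟨e, Finset.mem_filter.2 ⟨he, hy⟩, le_rfl⟩)

lemma add_le_rise {D : Finset (ℝ × ℝ)} {x : ℝ} {e : ℝ × ℝ} (he : e ∈ D) (hx : x ≤ e.1) :
    e.2 + η ≤ rise η w D x :=
  (Finset.le_fold_max _).2 (Or.inr ⟨e, Finset.mem_filter.2 ⟨he, hx⟩, le_rfl⟩)

lemma run_eq_or (D : Finset (ℝ × ℝ)) (y : ℝ) :
    run η w D y = w.1 ∨ ∃ u ∈ D, y ≤ u.2 ∧ run η w D y = u.1 + η := by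
  simpa only [run, Finset.mem_filter, and_assoc] using Finset.fold_max_eq_or {e ∈ D | y ≤ e.2}

lemma rise_eq_or (D : Finset (ℝ × ℝ)) (x : ℝ) :
    rise η w D x = w.2 ∨ ∃ v ∈ D, x ≤ v.1 ∧ rise η w D x = v.2 + η := by
  simpa only [rise, Finset.mem_filter, and_assoc] using Finset.fold_max_eq_or {e ∈ D | x ≤ e.1}

lemma run_le_iff {D : Finset (ℝ × ℝ)} {y z : ℝ} :
    run η w D y ≤ z ↔ w.1 ≤ z ∧ ∀ e ∈ D, y ≤ e.2 → e.1 + η ≤ z := by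
  simp only [run, Finset.fold_max_le, Finset.mem_filter, and_imp]

lemma rise_le_iff {D : Finset (ℝ × ℝ)} {x z : ℝ} :
    rise η w D x ≤ z ↔ w.2 ≤ z ∧ ∀ e ∈ D, x ≤ e.1 → e.2 + η ≤ z := by
  simp only [rise, Finset.fold_max_le, Finset.mem_filter, and_imp]

lemma le_corner (p : ℝ × ℝ) : w ≤ corner B η w p :=
  ⟨(Finset.le_fold_max _).2 (Or.inl le_rfl), (Finset.le_fold_max _).2 (Or.inl le_rfl)⟩

lemma lt_of_run_le (hη : 0 < η) {D : Finset (ℝ × ℝ)} {y : ℝ} {e : ℝ × ℝ} (he : e ∈ D)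
    (h : run η w D y ≤ e.1) : e.2 < y := by
  by_contra! hy
  linarith [add_le_run (η := η) (w := w) he hy]

lemma add_le_run_of_lt (hsep : Separated η B) (hwB : ∀ e ∈ B, w ≤ e) {D : Finset (ℝ × ℝ)}
    (hD : D ⊆ B) {y : ℝ} {e : ℝ × ℝ} (he : e ∈ B) (h : e.1 < run η w D y) :
    e.1 + η ≤ run η w D y := by
  rcases run_eq_or D y with ha | ⟨u, hu, -, ha⟩
  · linarith [(hwB e he).1]
  · rw [ha] at h ⊢
    have : e.1 ≤ u.1 := by
      by_contra! hue
      linarith [(hsep u (hD hu) e he).1 hue]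
    linarith

lemma corner_eq_of_run_eq {p u : ℝ × ℝ} (hu : u ∈ below B p)
    (ha : run η w (below B p) p.2 = u.1 + η)
    (hb : rise η w (below B p) (u.1 + η) = w.2 ∨
      ∃ v ∈ below B u, u.1 + η ≤ v.1 ∧ rise η w (below B p) (u.1 + η) = v.2 + η) :
    corner B η w p = (u.1 + η, rise η w (below B u) (u.1 + η)) := by
  refine Prod.ext ha ?_
  simp only [corner, ha]
  symm
  refine Finset.fold_max_eq_of_le (fun e he => ?_) ?_
  · obtain ⟨he, hue⟩ := Finset.mem_filter.1 he
    exact add_le_rise (below_subset_below hu he) hue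
  · simpa only [rise, Finset.mem_filter, and_assoc] using hb

lemma corner_eq_of_rise_eq (hη : 0 < η) (hsep : Separated η B) (hwB : ∀ e ∈ B, w ≤ e)
    {p v : ℝ × ℝ} (hv : v ∈ below B p) (hav : run η w (below B p) p.2 ≤ v.1)
    (hb : rise η w (below B p) (run η w (below B p) p.2) = v.2 + η)
    (ha : run η w (below B p) p.2 = w.1 ∨
      ∃ u ∈ below B v, p.2 ≤ u.2 ∧ run η w (below B p) p.2 = u.1 + η) :
    corner B η w p = (run η w (below B v) (v.2 + η), v.2 + η) := by
  set D := below B p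
  set a := run η w D p.2
  have hvB := (mem_below.1 hv).1
  have hvp : v.2 < p.2 := lt_of_run_le hη hv hav
  refine Prod.ext ?_ hb
  show a = run η w (below B v) (v.2 + η)
  symm
  refine Finset.fold_max_eq_of_le (fun e he => ?_) ?_
  · obtain ⟨heBv, hve⟩ := Finset.mem_filter.1 he
    refine add_le_run_of_lt hsep hwB (Finset.filter_subset _ _) (mem_below.1 heBv).1
      (lt_of_not_ge fun (hae : a ≤ e.1) => ?_)
    linarith [add_le_rise (η := η) (w := w) (below_subset_below hv heBv) hae]
  · rcases ha with ha | ⟨u, hu, hpu, ha⟩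
    · exact Or.inl ha
    · refine Or.inr ⟨u, Finset.mem_filter.2 ⟨hu, ?_⟩, ha⟩
      exact (hsep v hvB u (mem_below.1 hu).1).2.1 (hvp.trans_le hpu)

lemma corner_mem_candidates (hη : 0 < η) (hsep : Separated η B) (hwB : ∀ e ∈ B, w ≤ e)
    (p : ℝ × ℝ) : corner B η w p ∈ candidates B η w := by
  have right : ∀ u ∈ B, (u.1 + η, rise η w (below B u) (u.1 + η)) ∈ candidates B η w :=
    fun u hu => Finset.mem_insert_of_mem (Finset.mem_union_left _ (Finset.mem_image_of_mem _ hu))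
  have upper : ∀ v ∈ B, (run η w (below B v) (v.2 + η), v.2 + η) ∈ candidates B η w :=
    fun v hv => Finset.mem_insert_of_mem (Finset.mem_union_right _ (Finset.mem_image_of_mem _ hv))
  rcases rise_eq_or (below B p) (run η w (below B p) p.2) with hb | ⟨v, hv, hav, hb⟩ <;>
    rcases run_eq_or (below B p) p.2 with ha | ⟨u, hu, hpu, ha⟩
  · rw [show corner B η w p = w from Prod.ext ha hb]
    exact Finset.mem_insert_self _ _
  · rw [ha] at hb
    rw [corner_eq_of_run_eq hu ha (Or.inl hb)]
    exact right u (mem_below.1 hu).1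
  · rw [corner_eq_of_rise_eq hη hsep hwB hv hav hb (Or.inl ha)]
    exact upper v (mem_below.1 hv).1
  · rcases le_total (v.1 + v.2) (u.1 + u.2) with h | h
    · rw [ha] at hav hb
      rw [corner_eq_of_run_eq hu ha (Or.inr ⟨v, mem_below.2 ⟨(mem_below.1 hv).1, h⟩, hav, hb⟩)]
      exact right u (mem_below.1 hu).1
    · rw [corner_eq_of_rise_eq hη hsep hwB hv hav hb
        (Or.inr ⟨u, mem_below.2 ⟨(mem_below.1 hu).1, h⟩, hpu, ha⟩)]
      exact upper v (mem_below.1 hv).1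

lemma card_candidates_le : (candidates B η w).card ≤ 2 * B.card + 1 := by
  have := (Finset.card_union_le (B.image fun u => (u.1 + η, rise η w (below B u) (u.1 + η)))
    (B.image fun v => (run η w (below B v) (v.2 + η), v.2 + η))).trans
    (add_le_add Finset.card_image_le Finset.card_image_le)
  exact (Finset.card_insert_le _ _).trans (by omega)

lemma top_le (Λ : ℝ) (c : ℝ × ℝ) : top B η Λ c ≤ Λ :=
  (Finset.fold_min_le _).2 (Or.inl le_rfl)

lemma notMem_tri_top (hη : 0 < η) (Λ : ℝ) (c : ℝ × ℝ) {e : ℝ × ℝ} (he : e ∈ B) :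
    e ∉ tri c (top B η Λ c) := by
  rintro ⟨hce, hle⟩
  have : top B η Λ c ≤ e.1 + e.2 - η :=
    (Finset.fold_min_le _).2 (Or.inr ⟨e, Finset.mem_filter.2 ⟨he, hce⟩, le_rfl⟩)
  linarith

lemma mem_tri_corner (hη : 0 < η) {X : Finset (ℝ × ℝ)} (hsep : Separated η X) (hBX : B ⊆ X)
    {Λ : ℝ} {p : ℝ × ℝ} (hp : p ∈ X) (hpB : p ∉ B) (hwp : w ≤ p) (hpΛ : p.1 + p.2 ≤ Λ) :
    p ∈ tri (corner B η w p) (top B η Λ (corner B η w p)) := by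
  set D := below B p
  set a := run η w D p.2
  have hDX : ∀ e ∈ D, e ∈ X := fun e he => hBX (mem_below.1 he).1
  have ha : a ≤ p.1 := by
    refine run_le_iff.2 ⟨hwp.1, fun e he hpe => (hsep e (hDX e he) p hp).1 ?_⟩
    by_contra! hpe'
    obtain ⟨heB, hep⟩ := mem_below.1 he
    exact hpB (Prod.ext (by linarith) (by linarith : e.2 = p.2) ▸ heB)
  have hb : rise η w D a ≤ p.2 := rise_le_iff.2
    ⟨hwp.2, fun e he hae => (hsep e (hDX e he) p hp).2.1 (lt_of_run_le hη he hae)⟩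
  refine ⟨⟨ha, hb⟩, (Finset.le_fold_min _).2 ⟨hpΛ, fun e he => ?_⟩⟩
  obtain ⟨heB, hae, hbe⟩ : e ∈ B ∧ a ≤ e.1 ∧ rise η w D a ≤ e.2 := Finset.mem_filter.1 he
  have hpe : p.1 + p.2 < e.1 + e.2 := by
    by_contra! hep
    linarith [add_le_rise (η := η) (w := w) (mem_below.2 ⟨heB, hep⟩) hae]
  linarith [(hsep p hp e (hBX heB)).2.2 hpe]

open Classical in
lemma exists_lt_card_filter_mem_tri (hη : 0 < η) {X : Finset (ℝ × ℝ)} (hsep : Separated η X)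
    (hBX : B ⊆ X) {Λ : ℝ} (hX : ∀ p ∈ X, p ∈ tri w Λ) {n : ℕ}
    (hn : (2 * B.card + 1) * n < (X \ B).card) :
    ∃ c, w ≤ c ∧ n < {p ∈ X | p ∈ tri c (top B η Λ c)}.card := by
  obtain ⟨c, -, hc⟩ := Finset.exists_lt_card_fiber_of_mul_lt_card_of_maps_to
    (fun p _ => corner_mem_candidates hη (hsep.mono hBX) (fun e he => (hX e (hBX he)).1) p)
    ((Nat.mul_le_mul_right n card_candidates_le).trans_lt hn)
  obtain ⟨p, hp⟩ := Finset.card_pos.1 (n.zero_le.trans_lt hc)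
  refine ⟨c, (Finset.mem_filter.1 hp).2 ▸ le_corner p, hc.trans_le (Finset.card_le_card ?_)⟩
  intro p hp
  obtain ⟨hpXB, rfl⟩ := Finset.mem_filter.1 hp
  obtain ⟨hpX, hpB⟩ := Finset.mem_sdiff.1 hpXB
  exact Finset.mem_filter.2 ⟨hpX, mem_tri_corner hη hsep hBX hpX hpB (hX p hpX).1 (hX p hpX).2⟩

end Staircase

lemma ncard_coe_inter_eq_card_filter {α : Type*} (P : Finset α) (S : Set α)
    [DecidablePred (· ∈ S)] : ((P : Set α) ∩ S).ncard = {p ∈ P | p ∈ S}.card := by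
  rw [← Set.ncard_coe_finset, Finset.coe_filter]
  rfl

open Classical in
theorem le_ncard_colorClass {m : ℕ} (hm : 2 ≤ m) {P : Finset (ℝ × ℝ)} {φ : ℝ × ℝ → Fin 2}
    (hφ : PolyColor stdT P m 2 φ) {S : Set (ℝ × ℝ)} (hS : IsHomCopy stdT S) {t : ℕ}
    (hPS : 2 * m * t ≤ ((P : Set (ℝ × ℝ)) ∩ S).ncard) (c : Fin 2) :
    t ≤ ((({p ∈ P | φ p = c} : Finset (ℝ × ℝ)) : Set (ℝ × ℝ)) ∩ S).ncard := by
  obtain ⟨l, hl, w, rfl⟩ := hS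
  rw [image_stdT_eq_tri hl] at hPS ⊢
  set Λ := w.1 + w.2 + l
  set X := {p ∈ P | p ∈ tri w Λ}
  set B := {p ∈ X | φ p = c}
  have hBX : B ⊆ X := Finset.filter_subset _ _
  have hXS : ∀ p ∈ X, p ∈ tri w Λ := fun p hp => (Finset.mem_filter.1 hp).2
  rw [ncard_coe_inter_eq_card_filter] at hPS ⊢
  rw [show {p ∈ {p ∈ P | φ p = c} | p ∈ tri w Λ} = B by
    simp only [B, X, Finset.filter_filter, and_comm]]
  by_contra! hBt
  obtain ⟨η, hη, hsep⟩ := exists_separated X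
  have hcount : (2 * B.card + 1) * (m - 1) < (X \ B).card := by
    have hXB := Finset.card_sdiff_add_card_eq_card hBX
    obtain ⟨n, rfl⟩ : ∃ n, m = n + 2 := ⟨m - 2, by omega⟩
    rw [show n + 2 - 1 = n + 1 by omega]
    nlinarith [Nat.mul_le_mul_left (2 * (n + 2)) hBt]
  obtain ⟨c₀, hwc, hheavy⟩ := Staircase.exists_lt_card_filter_mem_tri hη hsep hBX hXS hcount
  set T := tri c₀ (Staircase.top B η Λ c₀)
  obtain ⟨p₁, hp₁, p₂, hp₂, hne⟩ := Finset.one_lt_card.1 (by omega : 1 < {p ∈ X | p ∈ T}.card)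
  have hmT : m ≤ ((P : Set (ℝ × ℝ)) ∩ T).ncard := by
    rw [ncard_coe_inter_eq_card_filter]
    refine (by omega : m ≤ {p ∈ X | p ∈ T}.card).trans (Finset.card_le_card ?_)
    exact Finset.monotone_filter_left _ (Finset.filter_subset _ _)
  obtain ⟨q, hqP, hqT, hqc⟩ := hφ T
    (isHomCopy_tri ⟨p₁, (Finset.mem_filter.1 hp₁).2, p₂, (Finset.mem_filter.1 hp₂).2, hne⟩) hmT c
  have hqX : q ∈ X := Finset.mem_filter.2 ⟨hqP, tri_subset_tri hwc (Staircase.top_le Λ c₀) hqT⟩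
  exact Staircase.notMem_tri_top hη Λ c₀ (Finset.mem_filter.2 ⟨hqX, hqc⟩) hqT

section PolyColor

variable {T : Set (ℝ × ℝ)} {P : Finset (ℝ × ℝ)} {m k : ℕ} {φ : ℝ × ℝ → Fin k}

lemma polyColor_one : PolyColor T P 1 1 fun _ => 0 :=
  fun _ _ hPS _ => by
    obtain ⟨p, hpP, hpS⟩ := Set.nonempty_of_ncard_ne_zero (Nat.one_le_iff_ne_zero.1 hPS)
    exact ⟨p, hpP, hpS, Subsingleton.elim _ _⟩

lemma PolyColor.mono {m' : ℕ} (h : PolyColor T P m k φ) (hm : m ≤ m') :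
    PolyColor T P m' k φ :=
  fun S hS hPS => h S hS (hm.trans hPS)

lemma PolyColor.comp_surjective {n : ℕ} {g : Fin k → Fin n} (h : PolyColor T P m k φ)
    (hg : Function.Surjective g) : PolyColor T P m n (g ∘ φ) := fun S hS hPS i => by
  obtain ⟨j, rfl⟩ := hg i
  obtain ⟨p, hp, hpS, rfl⟩ := h S hS hPS j
  exact ⟨p, hp, hpS, rfl⟩

lemma IsHomCopy.image_affineEquiv {S : Set (ℝ × ℝ)} (h : IsHomCopy T S)
    (f : (ℝ × ℝ) ≃ᵃ[ℝ] (ℝ × ℝ)) : IsHomCopy (f '' T) (f '' S) := by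
  obtain ⟨l, hl, w, rfl⟩ := h
  refine ⟨l, hl, f w - l • f 0, ?_⟩
  rw [Set.image_image, Set.image_image]
  refine Set.image_congr fun v _ => ?_
  have hf : ∀ x y, f (x + y) = f.linear x + f y := fun x y => f.map_vadd y x
  rw [hf, map_smul, show f v = f.linear v + f 0 by simpa using hf v 0]
  module

lemma PolyColor.image_affineEquiv (f : (ℝ × ℝ) ≃ᵃ[ℝ] (ℝ × ℝ))
    (h : PolyColor T (P.image f.symm) m k φ) : PolyColor (f '' T) P m k (φ ∘ f.symm) := by
  classical
  intro S hS hPS i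
  have hS' : IsHomCopy T (f.symm '' S) := by
    simpa only [Set.image_image, AffineEquiv.symm_apply_apply, Set.image_id']
      using hS.image_affineEquiv f.symm
  have hcard : ((P.image f.symm : Set (ℝ × ℝ)) ∩ f.symm '' S).ncard =
      ((P : Set (ℝ × ℝ)) ∩ S).ncard := by
    rw [Finset.coe_image, ← Set.image_inter f.symm.injective,
      Set.ncard_image_of_injective _ f.symm.injective]
  obtain ⟨q, hq, hqS, rfl⟩ := h _ hS' (hcard ▸ hPS) i
  obtain ⟨p, hp, rfl⟩ := Finset.mem_image.1 hq
  exact ⟨p, hp, f.symm.injective.mem_set_image.1 hqS, rfl⟩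

end PolyColor

theorem exists_polyColor_two_mul {m n k : ℕ} (hm : 2 ≤ m)
    (h2 : ∀ P : Finset (ℝ × ℝ), ∃ φ : ℝ × ℝ → Fin 2, PolyColor stdT P m 2 φ)
    (hk : ∀ P : Finset (ℝ × ℝ), ∃ ψ : ℝ × ℝ → Fin k, PolyColor stdT P n k ψ)
    (P : Finset (ℝ × ℝ)) :
    ∃ φ : ℝ × ℝ → Fin (2 * k), PolyColor stdT P (2 * m * n) (2 * k) φ := by
  obtain ⟨φ, hφ⟩ := h2 P
  choose ψ hψ using fun c : Fin 2 => hk {p ∈ P | φ p = c}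
  refine ⟨fun p => finProdFinEquiv (φ p, ψ (φ p) p), fun S hS hPS i => ?_⟩
  obtain ⟨⟨c, j⟩, rfl⟩ := finProdFinEquiv.surjective i
  obtain ⟨p, hp, hpS, hpj⟩ := hψ c S hS (le_ncard_colorClass hm hφ hS hPS c) j
  obtain ⟨hpP, rfl⟩ := Finset.mem_filter.1 hp
  exact ⟨p, hpP, hpS, by dsimp only; rw [hpj]⟩

theorem exists_polyColor_pow {m : ℕ} (hm : 2 ≤ m)
    (h2 : ∀ P : Finset (ℝ × ℝ), ∃ φ : ℝ × ℝ → Fin 2, PolyColor stdT P m 2 φ) (j : ℕ)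
    (P : Finset (ℝ × ℝ)) : ∃ φ : ℝ × ℝ → Fin (2 ^ j), PolyColor stdT P ((2 * m) ^ j) (2 ^ j) φ := by
  induction j generalizing P with
  | zero =>
    rw [pow_zero, pow_zero]
    exact ⟨fun _ => 0, polyColor_one⟩
  | succ j ih =>
    rw [pow_succ', pow_succ']
    exact exists_polyColor_two_mul hm h2 ih P

lemma convexHull_range_eq_image_stdSimplex {ι E : Type*} [Fintype ι] [AddCommGroup E]
    [Module ℝ E] (t : ι → E) :
    convexHull ℝ (Set.range t) = Fintype.linearCombination ℝ t '' stdSimplex ℝ ι := by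
  classical
  rw [← convexHull_rangle_single_eq_stdSimplex, LinearMap.image_convexHull, ← Set.range_comp]
  congr 2
  funext i
  simp only [Function.comp_apply, Fintype.linearCombination_apply_single, one_smul]

lemma AffineIndependent.linearIndependent_sub {k V : Type*} [Ring k] [AddCommGroup V]
    [Module k V] {t : Fin 3 → V} (ht : AffineIndependent k t) :
    LinearIndependent k ![t 1 - t 0, t 2 - t 0] := by
  refine LinearIndependent.pair_iff.2 fun a b hab => ?_
  have h := affineIndependent_iff.1 ht Finset.univ ![-a - b, a, b]
    (by simp only [Fin.sum_univ_three, Matrix.cons_val_zero, Matrix.cons_val_one,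
      Matrix.cons_val]; abel)
    (by simp only [Fin.sum_univ_three, Matrix.cons_val_zero, Matrix.cons_val_one,
      Matrix.cons_val]; rw [← hab, smul_sub, smul_sub, sub_smul, neg_smul]; abel)
  exact ⟨h 1 (Finset.mem_univ _), h 2 (Finset.mem_univ _)⟩

lemma exists_affineEquiv_image_stdT {t : Fin 3 → ℝ × ℝ} (ht : AffineIndependent ℝ t) :
    ∃ f : (ℝ × ℝ) ≃ᵃ[ℝ] (ℝ × ℝ), f '' stdT = convexHull ℝ (Set.range t) := by
  let L : (ℝ × ℝ) →ₗ[ℝ] (ℝ × ℝ) := (LinearMap.fst ℝ ℝ ℝ).smulRight (t 1 - t 0) +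
    (LinearMap.snd ℝ ℝ ℝ).smulRight (t 2 - t 0)
  have hL : Function.Injective L := by
    rw [← LinearMap.ker_eq_bot, LinearMap.ker_eq_bot']
    intro x hx
    obtain ⟨h1, h2⟩ := LinearIndependent.pair_iff.1 ht.linearIndependent_sub x.1 x.2 hx
    exact Prod.ext h1 h2
  let f := (LinearEquiv.ofInjectiveEndo L hL).toAffineEquiv.trans
    (AffineEquiv.constVAdd ℝ (ℝ × ℝ) (t 0))
  have hf : ∀ x, f x = x.1 • (t 1 - t 0) + x.2 • (t 2 - t 0) + t 0 := fun x => by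
    simp only [f, L, AffineEquiv.trans_apply, LinearEquiv.coe_toAffineEquiv,
      LinearEquiv.coe_ofInjectiveEndo, LinearMap.add_apply, LinearMap.coe_smulRight,
      LinearMap.fst_apply, LinearMap.snd_apply, AffineEquiv.constVAdd_apply, vadd_eq_add]
    abel
  refine ⟨f, ?_⟩
  rw [convexHull_range_eq_image_stdSimplex]
  ext y
  simp only [Set.mem_image, Fintype.linearCombination_apply, Fin.sum_univ_three, hf]
  constructor
  · rintro ⟨x, ⟨h1, h2, h3⟩, rfl⟩
    refine ⟨![1 - x.1 - x.2, x.1, x.2], ⟨fun i => ?_, ?_⟩, ?_⟩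
    · fin_cases i <;> simp only [Fin.zero_eta, Fin.mk_one, Fin.reduceFinMk, Matrix.cons_val_zero,
        Matrix.cons_val_one, Matrix.cons_val] <;> linarith
    · simp only [Fin.sum_univ_three, Matrix.cons_val_zero, Matrix.cons_val_one, Matrix.cons_val]
      ring
    · simp only [Matrix.cons_val_zero, Matrix.cons_val_one, Matrix.cons_val]
      module
  · rintro ⟨w, ⟨hw0, hw1⟩, rfl⟩
    rw [Fin.sum_univ_three] at hw1
    refine ⟨(w 1, w 2), ⟨hw0 1, hw0 2, by linarith [hw0 0]⟩, ?_⟩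
    rw [show w 0 = 1 - w 1 - w 2 by linarith]
    module

lemma Fin.clamp_surjective {n k : ℕ} (h : k + 1 ≤ n) :
    Function.Surjective fun c : Fin n => Fin.clamp c k :=
  fun i => ⟨⟨i, by omega⟩, Fin.ext (min_eq_left (Nat.lt_succ_iff.1 i.2))⟩

lemma pow_clog_two_le (n : ℕ) (hn : 0 < n) : (2 * 12) ^ Nat.clog 2 n ≤ 144 * n ^ 8 := by
  have h2n : 2 ^ Nat.clog 2 n ≤ 2 * n := by
    rcases Nat.lt_or_ge 1 n with h | h
    · have hlt := Nat.pow_pred_clog_lt_self one_lt_two h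
      rw [← Nat.succ_pred_eq_of_pos (Nat.clog_pos one_lt_two h), pow_succ']
      omega
    · obtain rfl : n = 1 := by omega
      simp
  calc (2 * 12) ^ Nat.clog 2 n ≤ (2 ^ 5) ^ Nat.clog 2 n := Nat.pow_le_pow_left (by norm_num) _
    _ = (2 ^ Nat.clog 2 n) ^ 5 := by rw [← pow_mul, ← pow_mul, mul_comm]
    _ ≤ (2 * n) ^ 5 := Nat.pow_le_pow_left h2n 5
    _ = 32 * n ^ 5 := by ring
    _ ≤ 144 * n ^ 8 := Nat.mul_le_mul (by norm_num) (Nat.pow_le_pow_right hn (by norm_num))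

theorem stmt_13
    (h12 : ∀ P : Finset (ℝ × ℝ), ∃ φ : ℝ × ℝ → Fin 2, PolyColor stdT P 12 2 φ) :
    ∀ P : Finset (ℝ × ℝ), ∀ t : Fin 3 → ℝ × ℝ, AffineIndependent ℝ t →
      ∀ k : ℕ, 0 < k →
        ∃ φ : ℝ × ℝ → Fin k,
          PolyColor (convexHull ℝ (Set.range t)) P (144 * k ^ 8) k φ := by
  intro P t ht k hk
  obtain ⟨f, hf⟩ := exists_affineEquiv_image_stdT ht
  obtain ⟨k, rfl⟩ := Nat.exists_eq_add_one_of_ne_zero hk.ne'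
  obtain ⟨φ, hφ⟩ := exists_polyColor_pow (by norm_num) h12 (Nat.clog 2 (k + 1)) (P.image f.symm)
  rw [← hf]
  exact ⟨_, ((hφ.image_affineEquiv f).mono (pow_clog_two_le (k + 1) hk)).comp_surjective
    (Fin.clamp_surjective (Nat.le_pow_clog one_lt_two _))⟩
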